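/- Define, for u ∈ ℝ with u⁴ < 1/2 and v ∈ ℝ: E(u) = u − (1 − u⁴)^{1/4}, F(u) = u + (1 − u⁴)^{1/4}, E′(u) = 1 + u³(1 − u⁴)^{−3/4}, F′(u) = 1 − u³(1 − u⁴)^{−3/4}, δ(u) = √(E′(u)² + F′(u)²), f(u, v) = (E(u)cos v, E(u)sin v, F(u)) ∈ ℝ³, and ξ(u, v) = (1/δ(u)) · (F′(u)cos v, F′(u)sin v, −E′(u)) ∈ ℝ³. Then for every such (u, v): (i) the vectors ∂f/∂u, ∂f/∂v, and ξ are linearly independent in ℝ³ (indeed det(∂f/∂u, ∂f/∂v, ξ) = −E(u)·δ(u) ≠ 0); and (ii) both partial derivatives ∂ξ/∂u and ∂ξ/∂v lie in the ℝ-linear span of ∂f/∂u and ∂f/∂v. -/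

import Mathlib

/-!
`f` is the surface of revolution of the profile curve `s ↦ (E s, F s)`, and `ξ` is the rotated
unit normal `δ⁻¹ (F', -E')` of that curve. A unit vector field along a planar curve has derivative
orthogonal to itself, so the derivative of the unit normal is parallel to the curve's velocity
`(E', F')`; rotating, `∂ξ/∂u` is a multiple of `∂f/∂u`. In the angular direction both `f` and `ξ`
move along `(-sin v, cos v, 0)`, with speeds `E` and `δ⁻¹ F'`, so `∂ξ/∂v` is a multiple of `∂f/∂v`
as soon as `E ≠ 0`. Transversality reduces to `E ≠ 0` and `δ ≠ 0`; the latter holds because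
`E' + F' = 2`, and `E < 0` because `u < (1 - u⁴)^{1/4}` when `u⁴ < 1/2`.
-/

noncomputable def Efun (u : ℝ) : ℝ := u - (1 - u ^ 4) ^ ((1 : ℝ) / 4)

noncomputable def Ffun (u : ℝ) : ℝ := u + (1 - u ^ 4) ^ ((1 : ℝ) / 4)

noncomputable def Efun' (u : ℝ) : ℝ := 1 + u ^ 3 * (1 - u ^ 4) ^ (-(3 : ℝ) / 4)

noncomputable def Ffun' (u : ℝ) : ℝ := 1 - u ^ 3 * (1 - u ^ 4) ^ (-(3 : ℝ) / 4)

noncomputable def deltaFun (u : ℝ) : ℝ := Real.sqrt (Efun' u ^ 2 + Ffun' u ^ 2)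

noncomputable def fMap (u v : ℝ) : ℝ × ℝ × ℝ :=
  (Efun u * Real.cos v, Efun u * Real.sin v, Ffun u)

noncomputable def xiMap (u v : ℝ) : ℝ × ℝ × ℝ :=
  (deltaFun u)⁻¹ • (Ffun' u * Real.cos v, Ffun' u * Real.sin v, -Efun' u)

open Real

theorem hasDerivAt_unitNormal {a b : ℝ → ℝ} {a' b' u : ℝ} (ha : HasDerivAt a a' u)
    (hb : HasDerivAt b b' u) (hab : 0 < a u ^ 2 + b u ^ 2) :
    HasDerivAt (fun s => (√(a s ^ 2 + b s ^ 2))⁻¹ • (b s, -a s))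
      (((a u * b' - a' * b u) / √(a u ^ 2 + b u ^ 2) ^ 3) • (a u, b u)) u := by
  have hδ0 : √(a u ^ 2 + b u ^ 2) ≠ 0 := (sqrt_pos.mpr hab).ne'
  have hδsq : √(a u ^ 2 + b u ^ 2) ^ 2 = a u ^ 2 + b u ^ 2 := sq_sqrt hab.le
  have hδ : HasDerivAt (fun s => √(a s ^ 2 + b s ^ 2)) _ u :=
    ((ha.fun_pow 2).fun_add (hb.fun_pow 2)).sqrt hab.ne'
  refine ((hδ.fun_inv hδ0).fun_smul (hb.prodMk ha.fun_neg)).congr_deriv ?_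
  ext <;> simp only [Prod.smul_mk, smul_eq_mul, mul_neg, Nat.cast_ofNat, Nat.add_one_sub_one,
    pow_one, Prod.mk_add_mk] <;> field_simp
  · linear_combination b' * hδsq
  · linear_combination -a' * hδsq

noncomputable def revolve (v : ℝ) (p : ℝ × ℝ) : ℝ × ℝ × ℝ := (p.1 * cos v, p.1 * sin v, p.2)

theorem revolve_smul (v c : ℝ) (p : ℝ × ℝ) : revolve v (c • p) = c • revolve v p := by
  simp [revolve, mul_assoc]

theorem hasDerivAt_revolve {γ : ℝ → ℝ × ℝ} {γ' : ℝ × ℝ} {u : ℝ} (v : ℝ)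
    (h : HasDerivAt γ γ' u) : HasDerivAt (fun s => revolve v (γ s)) (revolve v γ') u := by
  have h₁ : HasDerivAt (fun s => (γ s).1) γ'.1 u :=
    (hasFDerivAt_fst (p := γ u)).comp_hasDerivAt u h
  have h₂ : HasDerivAt (fun s => (γ s).2) γ'.2 u :=
    (hasFDerivAt_snd (p := γ u)).comp_hasDerivAt u h
  exact (h₁.mul_const _).prodMk ((h₁.mul_const _).prodMk h₂)

theorem hasDerivAt_revolve_angle (p : ℝ × ℝ) (v : ℝ) :
    HasDerivAt (fun t => revolve t p) (p.1 • ((-sin v, cos v, 0) : ℝ × ℝ × ℝ)) v := by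
  have h := ((hasDerivAt_cos v).const_mul p.1).prodMk
    (((hasDerivAt_sin v).const_mul p.1).prodMk (hasDerivAt_const v p.2))
  simpa [revolve, mul_comm] using h

theorem linearIndependent_revolve (v : ℝ) {p q : ℝ × ℝ} {r : ℝ} (hr : r ≠ 0)
    (hpq : p.1 * q.2 - p.2 * q.1 ≠ 0) :
    LinearIndependent ℝ ![revolve v p, r • ((-sin v, cos v, 0) : ℝ × ℝ × ℝ), revolve v q] := by
  rw [Fintype.linearIndependent_iff]
  intro g hg
  simp only [Fin.sum_univ_three, Matrix.cons_val_zero, Matrix.cons_val_one, Matrix.cons_val_two,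
    Matrix.tail_cons, Matrix.head_cons, revolve, Prod.smul_mk, Prod.mk_add_mk, smul_eq_mul,
    Prod.mk_eq_zero, mul_zero, add_zero] at hg
  obtain ⟨e₁, e₂, e₃⟩ := hg
  have hc := sin_sq_add_cos_sq v
  have h₁ : g 1 * r = 0 := by
    linear_combination cos v * e₂ - sin v * e₁ - g 1 * r * hc
  have h₀₂ : g 0 * p.1 + g 2 * q.1 = 0 := by
    linear_combination cos v * e₁ + sin v * e₂ - (g 0 * p.1 + g 2 * q.1) * hc
  have h₀ : g 0 * (p.1 * q.2 - p.2 * q.1) = 0 := by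
    linear_combination q.2 * h₀₂ - q.1 * e₃
  have h₂ : g 2 * (p.1 * q.2 - p.2 * q.1) = 0 := by
    linear_combination p.1 * e₃ - p.2 * h₀₂
  intro i
  fin_cases i
  · exact (mul_eq_zero.mp h₀).resolve_right hpq
  · exact (mul_eq_zero.mp h₁).resolve_right hr
  · exact (mul_eq_zero.mp h₂).resolve_right hpq

section Profile

variable {u : ℝ}

theorem hasDerivAt_one_sub_pow_four_rpow (q : ℝ) (hp : 0 < 1 - u ^ 4) :
    HasDerivAt (fun s : ℝ => (1 - s ^ 4) ^ q) (q * (1 - u ^ 4) ^ (q - 1) * -(4 * u ^ 3)) u := by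
  have h : HasDerivAt (fun s : ℝ => 1 - s ^ 4) (-(4 * u ^ 3)) u := by
    simpa using (hasDerivAt_pow 4 u).const_sub 1
  exact (hasDerivAt_rpow_const (Or.inl hp.ne')).comp u h

theorem hasDerivAt_Efun (hp : 0 < 1 - u ^ 4) : HasDerivAt Efun (Efun' u) u := by
  refine ((hasDerivAt_id u).sub (hasDerivAt_one_sub_pow_four_rpow (1 / 4) hp)).congr_deriv ?_
  rw [show (1 : ℝ) / 4 - 1 = -3 / 4 by norm_num, Efun']
  ring

theorem hasDerivAt_Ffun (hp : 0 < 1 - u ^ 4) : HasDerivAt Ffun (Ffun' u) u := by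
  refine ((hasDerivAt_id u).add (hasDerivAt_one_sub_pow_four_rpow (1 / 4) hp)).congr_deriv ?_
  rw [show (1 : ℝ) / 4 - 1 = -3 / 4 by norm_num, Ffun']
  ring

theorem differentiableAt_Efun' (hp : 0 < 1 - u ^ 4) : DifferentiableAt ℝ Efun' u := by
  unfold Efun'
  fun_prop (disch := exact Or.inl hp.ne')

theorem differentiableAt_Ffun' (hp : 0 < 1 - u ^ 4) : DifferentiableAt ℝ Ffun' u := by
  unfold Ffun'
  fun_prop (disch := exact Or.inl hp.ne')

theorem Efun'_sq_add_Ffun'_sq_pos (u : ℝ) : 0 < Efun' u ^ 2 + Ffun' u ^ 2 := by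
  have hsum : Efun' u + Ffun' u = 2 := by unfold Efun' Ffun'; ring
  nlinarith [sq_nonneg (Efun' u - Ffun' u)]

theorem deltaFun_pos (u : ℝ) : 0 < deltaFun u := sqrt_pos.mpr (Efun'_sq_add_Ffun'_sq_pos u)

theorem deltaFun_sq (u : ℝ) : deltaFun u ^ 2 = Efun' u ^ 2 + Ffun' u ^ 2 :=
  sq_sqrt (Efun'_sq_add_Ffun'_sq_pos u).le

theorem Efun_neg (hu : u ^ 4 < 1 / 2) : Efun u < 0 := by
  have hp : 0 < 1 - u ^ 4 := by linarith
  rw [Efun, sub_neg]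
  rcases le_or_gt u 0 with hu0 | hu0
  · exact hu0.trans_lt (rpow_pos_of_pos hp _)
  · calc u = (u ^ 4) ^ ((1 : ℝ) / 4) := by
          rw [← rpow_natCast, ← rpow_mul hu0.le]; norm_num
      _ < (1 - u ^ 4) ^ ((1 : ℝ) / 4) := rpow_lt_rpow (by positivity) (by linarith) (by norm_num)

end Profile

theorem fMap_eq_revolve (u v : ℝ) : fMap u v = revolve v (Efun u, Ffun u) := rfl

theorem xiMap_eq_revolve (u v : ℝ) :
    xiMap u v = revolve v ((deltaFun u)⁻¹ • (Ffun' u, -Efun' u)) := by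
  simp [xiMap, revolve, mul_assoc]

theorem exists_hasDerivAt_xiMap_eq_smul (v : ℝ) {u : ℝ} (hp : 0 < 1 - u ^ 4) :
    ∃ κ : ℝ, HasDerivAt (fun s => xiMap s v) (κ • revolve v (Efun' u, Ffun' u)) u := by
  have h := hasDerivAt_revolve v <| hasDerivAt_unitNormal (differentiableAt_Efun' hp).hasDerivAt
    (differentiableAt_Ffun' hp).hasDerivAt (Efun'_sq_add_Ffun'_sq_pos u)
  rw [revolve_smul] at h
  exact ⟨_, h.congr_of_eventuallyEq (.of_forall fun s => xiMap_eq_revolve s v)⟩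

/-- The field `ξ` is an equiaffine transversal vector field for the parametrized
surface `f`: (i) `∂f/∂u`, `∂f/∂v`, `ξ` are linearly independent, and
(ii) `∂ξ/∂u` and `∂ξ/∂v` are tangent, i.e. lie in `span {∂f/∂u, ∂f/∂v}`. -/
theorem stmt12 (u v : ℝ) (hu : u ^ 4 < 1 / 2) :
    LinearIndependent ℝ
      ![deriv (fun s => fMap s v) u, deriv (fun t => fMap u t) v, xiMap u v] ∧
    deriv (fun s => xiMap s v) u ∈
      Submodule.span ℝ {deriv (fun s => fMap s v) u, deriv (fun t => fMap u t) v} ∧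
    deriv (fun t => xiMap u t) v ∈
      Submodule.span ℝ {deriv (fun s => fMap s v) u, deriv (fun t => fMap u t) v} := by
  have hp : 0 < 1 - u ^ 4 := by linarith
  have hE : Efun u ≠ 0 := (Efun_neg hu).ne
  have hfu : HasDerivAt (fun s => fMap s v) (revolve v (Efun' u, Ffun' u)) u :=
    hasDerivAt_revolve v ((hasDerivAt_Efun hp).prodMk (hasDerivAt_Ffun hp))
  have hfv := hasDerivAt_revolve_angle (Efun u, Ffun u) v
  have hxv := hasDerivAt_revolve_angle ((deltaFun u)⁻¹ • (Ffun' u, -Efun' u)) v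
  simp only [← xiMap_eq_revolve, ← fMap_eq_revolve] at hfv hxv
  obtain ⟨κ, hxu⟩ := exists_hasDerivAt_xiMap_eq_smul v hp
  rw [hfu.deriv, hxu.deriv, hfv.deriv, hxv.deriv]
  refine ⟨?_, Submodule.smul_mem _ κ (Submodule.subset_span (Set.mem_insert _ _)), ?_⟩
  · rw [xiMap_eq_revolve]
    refine linearIndependent_revolve v hE ?_
    have hδ0 := (deltaFun_pos u).ne'
    calc Efun' u * ((deltaFun u)⁻¹ * -Efun' u) - Ffun' u * ((deltaFun u)⁻¹ * Ffun' u)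
        = -deltaFun u := by field_simp; linear_combination deltaFun_sq u
      _ ≠ 0 := neg_ne_zero.mpr hδ0
  · rw [← div_mul_cancel₀ ((deltaFun u)⁻¹ • (Ffun' u, -Efun' u)).1 hE, ← smul_smul]
    exact Submodule.smul_mem _ _ (Submodule.subset_span (Set.mem_insert_of_mem _ rfl))
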